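/- Under the delayed-information lower-bound setup for strongly convex losses, for every delayed decision rule (X_t)_{t=1}^T it holds that E[ Σ_{i=0}^{Z} Σ_{t=c_{iK′}+1}^{c_{(i+1)K′}} ( (n − 2K′ + 1)·⟨w_i, X_t(w_0,…,w_{i−1})⟩ + (αn/2)·‖X_t(w_0,…,w_{i−1})‖₂² ) − min_{x∈K} Σ_{i=0}^{Z} (c_{(i+1)K′} − c_{iK′})·( (n − 2K′ + 1)·⟨w_i, x⟩ + (αn/2)·‖x‖₂² ) ] ≥ α·(n − 2K′ + 1)²·R²·T / (2n(Z+1)). -/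

import Mathlib

/-!
Statement 7: the expected-regret inequality behind Theorem 3 (lower bound for
strongly convex losses in the delayed-information setup on the 1-connected cycle).
-/

open scoped BigOperators RealInnerProductSpace
open Finset

noncomputable section

abbrev EV (d : ℕ) := EuclideanSpace ℝ (Fin d)

/-- The random loss vectors: `w_i` has coordinates `±αR/√d`, the signs being given
by the Boolean family `ε`. -/
def cornerVec (d Zp : ℕ) (A : ℝ) (ε : Fin Zp → Fin d → Bool) (i : Fin Zp) : EV d :=
  WithLp.toLp 2 (fun j => (if ε i j then (1 : ℝ) else -1) * (A / Real.sqrt d))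


def flipB {Zp d : ℕ} (i : Fin Zp) (ε : Fin Zp → Fin d → Bool) : Fin Zp → Fin d → Bool :=
  fun k j => if k = i then !(ε k j) else ε k j

lemma flipB_flipB {Zp d : ℕ} (i : Fin Zp) (ε : Fin Zp → Fin d → Bool) :
    flipB i (flipB i ε) = ε := by
  funext k j; simp only [flipB]; split_ifs with h <;> simp

lemma cornerVec_flipB_self {Zp d : ℕ} (A : ℝ) (i : Fin Zp) (ε : Fin Zp → Fin d → Bool) :
    cornerVec d Zp A (flipB i ε) i = -cornerVec d Zp A ε i := by
  ext j
  simp only [cornerVec, flipB, if_pos rfl, PiLp.neg_apply, PiLp.toLp_apply]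
  cases ε i j <;> simp

lemma cornerVec_flipB_ne {Zp d : ℕ} (A : ℝ) {i k : Fin Zp} (h : k ≠ i)
    (ε : Fin Zp → Fin d → Bool) :
    cornerVec d Zp A (flipB i ε) k = cornerVec d Zp A ε k := by
  ext j; simp [cornerVec, flipB, h]

lemma flipB_ne {Zp d : ℕ} (hd : 0 < d) (i : Fin Zp) (ε : Fin Zp → Fin d → Bool) :
    flipB i ε ≠ ε := by
  intro h
  have := congrFun (congrFun h i) ⟨0, hd⟩
  simp [flipB] at this

lemma sum_flip_zero {Zp d : ℕ} (hd : 0 < d) (i : Fin Zp)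
    (f : (Fin Zp → Fin d → Bool) → ℝ) (hf : ∀ ε, f (flipB i ε) = -f ε) :
    ∑ ε : Fin Zp → Fin d → Bool, f ε = 0 := by
  refine Finset.sum_ninvolution (flipB i) (fun ε => by rw [hf]; ring)
    (fun ε _ => flipB_ne hd i ε) (fun ε => Finset.mem_univ _) (flipB_flipB i)

/-- inner self of a corner vector -/
lemma cornerVec_inner_self {Zp d : ℕ} (hd : 0 < d) (A : ℝ) (ε : Fin Zp → Fin d → Bool)
    (i : Fin Zp) : ⟪cornerVec d Zp A ε i, cornerVec d Zp A ε i⟫ = A ^ 2 := by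
  have hinner : ⟪cornerVec d Zp A ε i, cornerVec d Zp A ε i⟫
      = ∑ j, cornerVec d Zp A ε i j * cornerVec d Zp A ε i j := by
    simp only [PiLp.inner_apply, RCLike.inner_apply, conj_trivial]
  have hd' : (0:ℝ) < d := by exact_mod_cast hd
  have hds : Real.sqrt d * Real.sqrt d = (d : ℝ) := Real.mul_self_sqrt (le_of_lt hd')
  have hcoord : ∀ j : Fin d, cornerVec d Zp A ε i j * cornerVec d Zp A ε i j = A ^ 2 / d := by
    intro j
    have h1 : ((if ε i j then (1:ℝ) else -1)) ^ 2 = 1 := by cases ε i j <;> norm_num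
    have h2 : cornerVec d Zp A ε i j * cornerVec d Zp A ε i j
        = ((if ε i j then (1:ℝ) else -1)) ^ 2 * ((A / Real.sqrt d) * (A / Real.sqrt d)) := by
      simp only [cornerVec, PiLp.toLp_apply]; ring
    rw [h2, h1, one_mul, div_mul_div_comm, hds]; ring
  rw [hinner, Finset.sum_congr rfl (fun j _ => hcoord j), Finset.sum_const]
  simp only [Finset.card_univ, Fintype.card_fin, nsmul_eq_mul]
  field_simp

/-- quadratic lower bound: b⟪s,x⟫ + g‖x‖² ≥ -b²‖s‖²/(4g) -/
lemma quad_lb {d : ℕ} (s x : EV d) (b g : ℝ) (hg : 0 < g) :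
    -(b ^ 2 * ‖s‖ ^ 2 / (4 * g)) ≤ b * ⟪s, x⟫ + g * ‖x‖ ^ 2 := by
  have h0 : (0:ℝ) ≤ g * ‖x + (b / (2 * g)) • s‖ ^ 2 := by positivity
  have hexp : ‖x + (b / (2 * g)) • s‖ ^ 2
      = ‖x‖ ^ 2 + 2 * ((b / (2 * g)) * ⟪s, x⟫) + (b / (2 * g)) ^ 2 * ‖s‖ ^ 2 := by
    rw [norm_add_sq_real, real_inner_smul_right, norm_smul, Real.norm_eq_abs, mul_pow, sq_abs]
    rw [← real_inner_comm s x]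
  rw [hexp] at h0
  have hg' : g ≠ 0 := ne_of_gt hg
  have key : g * (‖x‖ ^ 2 + 2 * ((b / (2 * g)) * ⟪s, x⟫) + (b / (2 * g)) ^ 2 * ‖s‖ ^ 2)
      = g * ‖x‖ ^ 2 + b * ⟪s, x⟫ + b ^ 2 * ‖s‖ ^ 2 / (4 * g) := by
    field_simp
    ring
  rw [key] at h0
  linarith

/-- value at the minimizer -/
lemma quad_val {d : ℕ} (s : EV d) (b g : ℝ) (hg : 0 < g) :
    b * ⟪s, -(b / (2 * g)) • s⟫ + g * ‖-(b / (2 * g)) • s‖ ^ 2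
      = -(b ^ 2 * ‖s‖ ^ 2 / (4 * g)) := by
  rw [real_inner_smul_right, norm_smul, Real.norm_eq_abs, mul_pow, sq_abs,
    real_inner_self_eq_norm_sq]
  have hg' : g ≠ 0 := ne_of_gt hg
  field_simp
  ring

lemma sInf_quad_le {d : ℕ} (s : EV d) (b g : ℝ) (hg : 0 < g) (Kset : Set (EV d))
    (hmem : -(b / (2 * g)) • s ∈ Kset) :
    sInf ((fun x => b * ⟪s, x⟫ + g * ‖x‖ ^ 2) '' Kset) ≤ -(b ^ 2 * ‖s‖ ^ 2 / (4 * g)) := by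
  have hbdd : BddBelow ((fun x => b * ⟪s, x⟫ + g * ‖x‖ ^ 2) '' Kset) := by
    refine ⟨-(b ^ 2 * ‖s‖ ^ 2 / (4 * g)), ?_⟩
    rintro y ⟨x, _, rfl⟩
    exact quad_lb s x b g hg
  have h := csInf_le hbdd ⟨_, hmem, rfl⟩
  simp only at h
  rwa [quad_val s b g hg] at h

lemma cornerVec_abs {Zp d : ℕ} {A : ℝ} (hA : 0 ≤ A) (ε : Fin Zp → Fin d → Bool)
    (i : Fin Zp) (j : Fin d) :
    |cornerVec d Zp A ε i j| = A / Real.sqrt d := by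
  have : |A / Real.sqrt d| = A / Real.sqrt d :=
    abs_of_nonneg (div_nonneg hA (Real.sqrt_nonneg _))
  simp only [cornerVec, PiLp.toLp_apply, abs_mul]
  cases ε i j <;> simp [this]

lemma EV_sum_apply {d k : ℕ} (v : Fin k → EV d) (j : Fin d) :
    (∑ i, v i) j = ∑ i, v i j := by
  induction (univ : Finset (Fin k)) using Finset.cons_induction with
  | empty => simp
  | cons a s ha ih => rw [Finset.sum_cons, Finset.sum_cons, ← ih]; rfl

theorem statement_7 (m d C T n K' Z : ℕ)
    (hm : 1 ≤ m) (hd : 1 ≤ d) (hC : 1 ≤ C) (hT : 1 ≤ T)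
    (hn : n = 2 * (m + 1)) (hK' : K' = (m + 1) / 2) (hZ : Z = C / K')
    (R α : ℝ) (hR : 0 < R) (hα : 0 < α)
    (c : ℕ → ℕ) (hc0 : c 0 = 0) (hcmono : ∀ j, j < C → c j < c (j + 1)) (hcT : c C < T)
    (cc : ℕ → ℕ) (hccle : ∀ i, i ≤ Z → cc i = c (i * K')) (hccZ : cc (Z + 1) = T)
    (Kset : Set (EV d))
    (hKset : Kset = {x : EV d | ∀ j, |x j| ≤ R / Real.sqrt d})
    -- delayed decision rule: in interval i, the decision depends only on w_0,…,w_{i−1}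
    (X : ℕ → (Fin (Z + 1) → EV d) → EV d)
    (hXmem : ∀ t w, X t w ∈ Kset)
    (hXdelay : ∀ i : Fin (Z + 1), ∀ t, cc i < t → t ≤ cc ((i : ℕ) + 1) →
        ∀ w w' : Fin (Z + 1) → EV d,
          (∀ j : Fin (Z + 1), (j : ℕ) < (i : ℕ) → w j = w' j) → X t w = X t w') :
    -- expected regret lower bound
    α * ((n : ℝ) - 2 * K' + 1) ^ 2 * R ^ 2 * T / (2 * n * (Z + 1)) ≤
      (∑ ε : Fin (Z + 1) → Fin d → Bool,
          ((∑ i : Fin (Z + 1), ∑ t ∈ Finset.Ioc (cc i) (cc ((i : ℕ) + 1)),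
              (((n : ℝ) - 2 * K' + 1) *
                  ⟪cornerVec d (Z + 1) (α * R) ε i, X t (cornerVec d (Z + 1) (α * R) ε)⟫
                + α * n / 2 * ‖X t (cornerVec d (Z + 1) (α * R) ε)‖ ^ 2))
            - sInf ((fun x : EV d => ∑ i : Fin (Z + 1),
                ((cc ((i : ℕ) + 1) : ℝ) - (cc i : ℝ)) *
                  (((n : ℝ) - 2 * K' + 1) * ⟪cornerVec d (Z + 1) (α * R) ε i, x⟫
                    + α * n / 2 * ‖x‖ ^ 2)) '' Kset)))
        / 2 ^ ((Z + 1) * d) := by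
  classical
  set B : ℝ := (n : ℝ) - 2 * K' + 1 with hBdef
  set ga : ℝ := α * n / 2 with hgadef
  set W : (Fin (Z + 1) → Fin d → Bool) → Fin (Z + 1) → EV d :=
    cornerVec d (Z + 1) (α * R) with hWdef
  have hd0 : 0 < d := hd
  -- basic numeric facts
  have hK1 : 1 ≤ K' := by
    rw [hK']; exact Nat.one_le_div_iff (by norm_num) |>.2 (by omega)
  have h2K : 2 * K' ≤ m + 1 := by
    rw [hK', mul_comm]; exact Nat.div_mul_le_self _ _
  have hBpos : 0 < B := by
    have h1 : (2 * K' : ℝ) ≤ ((m : ℝ) + 1) := by exact_mod_cast h2K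
    have h2 : (n : ℝ) = 2 * ((m : ℝ) + 1) := by rw [hn]; push_cast; ring
    rw [hBdef, h2]; push_cast at h1 ⊢; linarith
  have hBn : B ≤ (n : ℝ) := by
    have : (1 : ℝ) ≤ (K' : ℝ) := by exact_mod_cast hK1
    rw [hBdef]; linarith
  have hnpos : (0 : ℝ) < n := by
    have : 0 < n := by omega
    exact_mod_cast this
  have hgapos : 0 < ga := by rw [hgadef]; positivity
  have hTpos : (0 : ℝ) < T := by exact_mod_cast hT
  have hApos : 0 < α * R := mul_pos hα hR
  have hsq : (0 : ℝ) < Real.sqrt d := Real.sqrt_pos.2 (by exact_mod_cast hd0)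
  -- monotonicity of c
  have hcmonole : ∀ b a : ℕ, a ≤ b → b ≤ C → c a ≤ c b := by
    intro b
    induction b with
    | zero =>
      intro a h _
      have : a = 0 := Nat.le_zero.mp h
      subst this; exact le_refl _
    | succ k ih =>
      intro a hak hkC
      rcases Nat.lt_succ_iff_lt_or_eq.mp (Nat.lt_succ_of_le hak) with h | h
      · exact le_trans (ih a (Nat.lt_succ_iff.mp h) (by omega))
          (le_of_lt (hcmono k (by omega)))
      · subst h; exact le_refl _
  have hZKC : Z * K' ≤ C := by rw [hZ]; exact Nat.div_mul_le_self _ _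
  have hccmon : ∀ i : ℕ, i ≤ Z → cc i ≤ cc (i + 1) := by
    intro i hi
    rcases eq_or_lt_of_le hi with h | h
    · rw [h, hccle Z le_rfl, hccZ]
      exact le_of_lt (lt_of_le_of_lt (hcmonole C _ hZKC le_rfl) hcT)
    · rw [hccle i hi, hccle (i + 1) h]
      exact hcmonole ((i + 1) * K') (i * K')
        (Nat.mul_le_mul_right _ (Nat.le_succ i))
        (le_trans (Nat.mul_le_mul_right _ h) hZKC)
  have hLnn : ∀ i : Fin (Z + 1), (0 : ℝ) ≤ ((cc ((i : ℕ) + 1) : ℝ) - (cc (i : ℕ) : ℝ)) := by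
    intro i
    have h := hccmon (i : ℕ) (Nat.lt_succ_iff.mp i.2)
    have : ((cc (i : ℕ) : ℝ)) ≤ ((cc ((i : ℕ) + 1) : ℝ)) := by exact_mod_cast h
    linarith
  have hcc0 : cc 0 = 0 := by rw [hccle 0 (Nat.zero_le _), Nat.zero_mul, hc0]
  have hsumL : ∑ i : Fin (Z + 1), ((cc ((i : ℕ) + 1) : ℝ) - (cc (i : ℕ) : ℝ)) = T := by
    rw [Fin.sum_univ_eq_sum_range (fun i => ((cc (i + 1) : ℝ) - (cc i : ℝ)))]
    rw [Finset.sum_range_sub (fun i => (cc i : ℝ)), hccZ, hcc0]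
    simp
  have hCS : (T : ℝ) ^ 2 ≤ ((Z : ℝ) + 1) *
      ∑ i : Fin (Z + 1), ((cc ((i : ℕ) + 1) : ℝ) - (cc (i : ℕ) : ℝ)) ^ 2 := by
    have h : (∑ i : Fin (Z + 1), ((cc ((i : ℕ) + 1) : ℝ) - (cc (i : ℕ) : ℝ))) ^ 2 ≤
        ((Finset.univ : Finset (Fin (Z + 1))).card : ℝ) *
          ∑ i : Fin (Z + 1), ((cc ((i : ℕ) + 1) : ℝ) - (cc (i : ℕ) : ℝ)) ^ 2 :=
      sq_sum_le_card_mul_sum_sq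
    rw [hsumL, Finset.card_univ, Fintype.card_fin] at h
    push_cast at h ⊢
    exact h
  -- the aggregated corner vectors
  set sV : (Fin (Z + 1) → Fin d → Bool) → EV d :=
    fun ε => ∑ i : Fin (Z + 1), ((cc ((i : ℕ) + 1) : ℝ) - (cc (i : ℕ) : ℝ)) • W ε i with hsVdef
  -- flipping facts
  have hWflip : ∀ (i : Fin (Z + 1)) ε, W (flipB i ε) i = -W ε i := by
    intro i ε; rw [hWdef]; exact cornerVec_flipB_self _ i ε
  have hWflipne : ∀ (i k : Fin (Z + 1)), k ≠ i → ∀ ε, W (flipB i ε) k = W ε k := by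
    intro i k hk ε; rw [hWdef]; exact cornerVec_flipB_ne _ hk ε
  have hXflip : ∀ (i : Fin (Z + 1)) (t : ℕ), t ∈ Finset.Ioc (cc (i : ℕ)) (cc ((i : ℕ) + 1)) →
      ∀ ε, X t (W (flipB i ε)) = X t (W ε) := by
    intro i t ht ε
    exact hXdelay i t (Finset.mem_Ioc.mp ht).1 (Finset.mem_Ioc.mp ht).2 _ _
      (fun j hj => hWflipne i j (Fin.ne_of_lt hj) ε)
  -- expectation of the linear part of the player's loss vanishes
  have hPsum : ∑ ε : Fin (Z + 1) → Fin d → Bool,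
      ∑ i : Fin (Z + 1), ∑ t ∈ Finset.Ioc (cc (i : ℕ)) (cc ((i : ℕ) + 1)),
        B * ⟪W ε i, X t (W ε)⟫ = 0 := by
    rw [Finset.sum_comm]
    refine Finset.sum_eq_zero fun i _ => ?_
    rw [Finset.sum_comm]
    refine Finset.sum_eq_zero fun t ht => ?_
    refine sum_flip_zero hd0 i _ fun ε => ?_
    rw [hXflip i t ht ε, hWflip i ε, inner_neg_left]; ring
  -- cardinality of the sample space
  have hcard : Fintype.card (Fin (Z + 1) → Fin d → Bool) = 2 ^ ((Z + 1) * d) := by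
    rw [Fintype.card_fun, Fintype.card_fun, Fintype.card_bool, Fintype.card_fin,
      Fintype.card_fin, ← pow_mul, mul_comm d]
  -- second moment of the aggregated vector
  set SL : ℝ := ∑ i : Fin (Z + 1), ((cc ((i : ℕ) + 1) : ℝ) - (cc (i : ℕ) : ℝ)) ^ 2 with hSLdef
  have hss : ∑ ε : Fin (Z + 1) → Fin d → Bool, ‖sV ε‖ ^ 2
      = 2 ^ ((Z + 1) * d) * ((α * R) ^ 2 * SL) := by
    have hnormsq : ∀ ε, ‖sV ε‖ ^ 2 = ∑ i : Fin (Z + 1), ∑ i' : Fin (Z + 1),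
        ((cc ((i : ℕ) + 1) : ℝ) - (cc (i : ℕ) : ℝ)) *
          ((cc ((i' : ℕ) + 1) : ℝ) - (cc (i' : ℕ) : ℝ)) * ⟪W ε i, W ε i'⟫ := by
      intro ε
      rw [← real_inner_self_eq_norm_sq]
      simp only [hsVdef]
      rw [sum_inner]
      refine Finset.sum_congr rfl fun i _ => ?_
      rw [real_inner_smul_left, inner_sum, Finset.mul_sum]
      refine Finset.sum_congr rfl fun i' _ => ?_
      rw [real_inner_smul_right]; ring
    have hdiag : ∀ (i : Fin (Z + 1)) ε, ⟪W ε i, W ε i⟫ = (α * R) ^ 2 := by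
      intro i ε; rw [hWdef]; exact cornerVec_inner_self hd0 _ ε i
    have hoff : ∀ (i i' : Fin (Z + 1)), i' ≠ i →
        ∑ ε : Fin (Z + 1) → Fin d → Bool,
          ((cc ((i : ℕ) + 1) : ℝ) - (cc (i : ℕ) : ℝ)) *
            ((cc ((i' : ℕ) + 1) : ℝ) - (cc (i' : ℕ) : ℝ)) * ⟪W ε i, W ε i'⟫ = 0 := by
      intro i i' hne
      refine sum_flip_zero hd0 i _ fun ε => ?_
      rw [hWflip i ε, hWflipne i i' hne ε, inner_neg_left]; ring
    calc ∑ ε : Fin (Z + 1) → Fin d → Bool, ‖sV ε‖ ^ 2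
        = ∑ ε : Fin (Z + 1) → Fin d → Bool, ∑ i : Fin (Z + 1), ∑ i' : Fin (Z + 1),
            ((cc ((i : ℕ) + 1) : ℝ) - (cc (i : ℕ) : ℝ)) *
              ((cc ((i' : ℕ) + 1) : ℝ) - (cc (i' : ℕ) : ℝ)) * ⟪W ε i, W ε i'⟫ :=
          Finset.sum_congr rfl fun ε _ => hnormsq ε
      _ = ∑ i : Fin (Z + 1), ∑ ε : Fin (Z + 1) → Fin d → Bool, ∑ i' : Fin (Z + 1),
            ((cc ((i : ℕ) + 1) : ℝ) - (cc (i : ℕ) : ℝ)) *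
              ((cc ((i' : ℕ) + 1) : ℝ) - (cc (i' : ℕ) : ℝ)) * ⟪W ε i, W ε i'⟫ :=
          Finset.sum_comm
      _ = ∑ i : Fin (Z + 1), ∑ i' : Fin (Z + 1), ∑ ε : Fin (Z + 1) → Fin d → Bool,
            ((cc ((i : ℕ) + 1) : ℝ) - (cc (i : ℕ) : ℝ)) *
              ((cc ((i' : ℕ) + 1) : ℝ) - (cc (i' : ℕ) : ℝ)) * ⟪W ε i, W ε i'⟫ :=
          Finset.sum_congr rfl fun i _ => Finset.sum_comm
      _ = ∑ i : Fin (Z + 1), ∑ ε : Fin (Z + 1) → Fin d → Bool,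
            ((cc ((i : ℕ) + 1) : ℝ) - (cc (i : ℕ) : ℝ)) *
              ((cc ((i : ℕ) + 1) : ℝ) - (cc (i : ℕ) : ℝ)) * ⟪W ε i, W ε i⟫ :=
          Finset.sum_congr rfl fun i _ =>
            Finset.sum_eq_single_of_mem i (Finset.mem_univ i) (fun i' _ h => hoff i i' h)
      _ = ∑ i : Fin (Z + 1), ∑ _ε : Fin (Z + 1) → Fin d → Bool,
            ((cc ((i : ℕ) + 1) : ℝ) - (cc (i : ℕ) : ℝ)) ^ 2 * (α * R) ^ 2 := by
          refine Finset.sum_congr rfl fun i _ => Finset.sum_congr rfl fun ε _ => ?_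
          rw [hdiag i ε]; ring
      _ = ∑ i : Fin (Z + 1), (2 ^ ((Z + 1) * d) : ℝ) *
            (((cc ((i : ℕ) + 1) : ℝ) - (cc (i : ℕ) : ℝ)) ^ 2 * (α * R) ^ 2) := by
          refine Finset.sum_congr rfl fun i _ => ?_
          rw [Finset.sum_const, Finset.card_univ, hcard, nsmul_eq_mul]
          push_cast; ring
      _ = 2 ^ ((Z + 1) * d) * ((α * R) ^ 2 * SL) := by
          rw [← Finset.mul_sum]
          congr 1
          rw [hSLdef, Finset.mul_sum]
          exact Finset.sum_congr rfl fun i _ => by ring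
  -- identify the comparator loss with a quadratic
  have hFeq : ∀ ε, (fun x : EV d => ∑ i : Fin (Z + 1),
        ((cc ((i : ℕ) + 1) : ℝ) - (cc (i : ℕ) : ℝ)) *
          (B * ⟪W ε i, x⟫ + ga * ‖x‖ ^ 2))
      = fun x : EV d => B * ⟪sV ε, x⟫ + (ga * T) * ‖x‖ ^ 2 := by
    intro ε; funext x
    have h1 : ⟪sV ε, x⟫ = ∑ i : Fin (Z + 1),
        ((cc ((i : ℕ) + 1) : ℝ) - (cc (i : ℕ) : ℝ)) * ⟪W ε i, x⟫ := by
      simp only [hsVdef]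
      rw [sum_inner]
      exact Finset.sum_congr rfl fun i _ => real_inner_smul_left _ _ _
    calc ∑ i : Fin (Z + 1), ((cc ((i : ℕ) + 1) : ℝ) - (cc (i : ℕ) : ℝ)) *
            (B * ⟪W ε i, x⟫ + ga * ‖x‖ ^ 2)
        = B * (∑ i : Fin (Z + 1),
              ((cc ((i : ℕ) + 1) : ℝ) - (cc (i : ℕ) : ℝ)) * ⟪W ε i, x⟫)
            + (∑ i : Fin (Z + 1), ((cc ((i : ℕ) + 1) : ℝ) - (cc (i : ℕ) : ℝ)))
              * (ga * ‖x‖ ^ 2) := by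
          rw [Finset.mul_sum, Finset.sum_mul, ← Finset.sum_add_distrib]
          exact Finset.sum_congr rfl fun i _ => by ring
      _ = B * ⟪sV ε, x⟫ + (ga * T) * ‖x‖ ^ 2 := by rw [hsumL, ← h1]; ring
  -- the clipped minimizer lies in the decision set
  have hgaT : (0 : ℝ) < ga * T := mul_pos hgapos hTpos
  have hmemstar : ∀ ε, -(B / (2 * (ga * T))) • sV ε ∈ Kset := by
    intro ε
    rw [hKset]
    intro j
    have hcoord : (-(B / (2 * (ga * T))) • sV ε) j = -(B / (2 * (ga * T))) * sV ε j := by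
      rw [PiLp.smul_apply, smul_eq_mul]
    have hsj : |sV ε j| ≤ (T : ℝ) * ((α * R) / Real.sqrt d) := by
      have happ : sV ε j = ∑ i : Fin (Z + 1),
          (((cc ((i : ℕ) + 1) : ℝ) - (cc (i : ℕ) : ℝ)) • W ε i) j := by
        simp only [hsVdef]; exact EV_sum_apply _ j
      rw [happ]
      calc |∑ i : Fin (Z + 1), (((cc ((i : ℕ) + 1) : ℝ) - (cc (i : ℕ) : ℝ)) • W ε i) j|
          ≤ ∑ i : Fin (Z + 1),
              |(((cc ((i : ℕ) + 1) : ℝ) - (cc (i : ℕ) : ℝ)) • W ε i) j| :=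
            Finset.abs_sum_le_sum_abs _ _
        _ = ∑ i : Fin (Z + 1), ((cc ((i : ℕ) + 1) : ℝ) - (cc (i : ℕ) : ℝ)) *
              ((α * R) / Real.sqrt d) := by
            refine Finset.sum_congr rfl fun i _ => ?_
            rw [PiLp.smul_apply, smul_eq_mul, abs_mul, abs_of_nonneg (hLnn i), hWdef,
              cornerVec_abs hApos.le]
        _ = (T : ℝ) * ((α * R) / Real.sqrt d) := by rw [← Finset.sum_mul, hsumL]
    have habs : |(-(B / (2 * (ga * T))) • sV ε) j|
        = (B / (2 * (ga * T))) * |sV ε j| := by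
      rw [hcoord, abs_mul, abs_neg, abs_of_pos (by positivity)]
    rw [habs]
    calc (B / (2 * (ga * T))) * |sV ε j|
        ≤ (B / (2 * (ga * T))) * ((T : ℝ) * ((α * R) / Real.sqrt d)) :=
          mul_le_mul_of_nonneg_left hsj (by positivity)
      _ = (B / (n : ℝ)) * (R / Real.sqrt d) := by
          have hgaT' : (2 * (ga * (T : ℝ))) = α * (n : ℝ) * T := by rw [hgadef]; ring
          rw [hgaT']
          field_simp
      _ ≤ R / Real.sqrt d := by
          have hB1 : B / (n : ℝ) ≤ 1 := (div_le_one hnpos).2 hBn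
          exact mul_le_of_le_one_left (by positivity) hB1
  -- the comparator minimum is small
  have hMle : ∀ ε, sInf ((fun x : EV d => ∑ i : Fin (Z + 1),
        ((cc ((i : ℕ) + 1) : ℝ) - (cc (i : ℕ) : ℝ)) *
          (B * ⟪W ε i, x⟫ + ga * ‖x‖ ^ 2)) '' Kset)
      ≤ -(B ^ 2 * ‖sV ε‖ ^ 2 / (4 * (ga * T))) := by
    intro ε
    rw [hFeq ε]
    exact sInf_quad_le (sV ε) B (ga * T) hgaT Kset (hmemstar ε)
  -- per-sample lower bound on the regret
  have hkey : ∀ ε : Fin (Z + 1) → Fin d → Bool,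
      (∑ i : Fin (Z + 1), ∑ t ∈ Finset.Ioc (cc (i : ℕ)) (cc ((i : ℕ) + 1)),
          B * ⟪W ε i, X t (W ε)⟫)
        + B ^ 2 * ‖sV ε‖ ^ 2 / (4 * (ga * T))
      ≤ (∑ i : Fin (Z + 1), ∑ t ∈ Finset.Ioc (cc (i : ℕ)) (cc ((i : ℕ) + 1)),
          (B * ⟪W ε i, X t (W ε)⟫ + ga * ‖X t (W ε)‖ ^ 2))
        - sInf ((fun x : EV d => ∑ i : Fin (Z + 1),
            ((cc ((i : ℕ) + 1) : ℝ) - (cc (i : ℕ) : ℝ)) *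
              (B * ⟪W ε i, x⟫ + ga * ‖x‖ ^ 2)) '' Kset) := by
    intro ε
    have h1 : (∑ i : Fin (Z + 1), ∑ t ∈ Finset.Ioc (cc (i : ℕ)) (cc ((i : ℕ) + 1)),
          B * ⟪W ε i, X t (W ε)⟫)
        ≤ ∑ i : Fin (Z + 1), ∑ t ∈ Finset.Ioc (cc (i : ℕ)) (cc ((i : ℕ) + 1)),
          (B * ⟪W ε i, X t (W ε)⟫ + ga * ‖X t (W ε)‖ ^ 2) :=
      Finset.sum_le_sum fun i _ => Finset.sum_le_sum fun t _ =>
        le_add_of_nonneg_right (by positivity)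
    have h2 := hMle ε
    linarith
  -- putting everything together
  have h2N : (0 : ℝ) < 2 ^ ((Z + 1) * d) := by positivity
  rw [le_div_iff₀ h2N]
  have hsum1 : ∑ ε : Fin (Z + 1) → Fin d → Bool,
      ((∑ i : Fin (Z + 1), ∑ t ∈ Finset.Ioc (cc (i : ℕ)) (cc ((i : ℕ) + 1)),
          B * ⟪W ε i, X t (W ε)⟫)
        + B ^ 2 * ‖sV ε‖ ^ 2 / (4 * (ga * T)))
      = B ^ 2 / (4 * (ga * T)) * (2 ^ ((Z + 1) * d) * ((α * R) ^ 2 * SL)) := by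
    rw [Finset.sum_add_distrib, hPsum, zero_add]
    calc ∑ ε : Fin (Z + 1) → Fin d → Bool, B ^ 2 * ‖sV ε‖ ^ 2 / (4 * (ga * T))
        = ∑ ε : Fin (Z + 1) → Fin d → Bool, (B ^ 2 / (4 * (ga * T))) * ‖sV ε‖ ^ 2 :=
          Finset.sum_congr rfl fun ε _ => by ring
      _ = (B ^ 2 / (4 * (ga * T))) * ∑ ε : Fin (Z + 1) → Fin d → Bool, ‖sV ε‖ ^ 2 :=
          (Finset.mul_sum _ _ _).symm
      _ = B ^ 2 / (4 * (ga * T)) * (2 ^ ((Z + 1) * d) * ((α * R) ^ 2 * SL)) := by rw [hss]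
  have hmain : α * B ^ 2 * R ^ 2 * T / (2 * n * ((Z : ℝ) + 1)) * 2 ^ ((Z + 1) * d)
      ≤ B ^ 2 / (4 * (ga * T)) * (2 ^ ((Z + 1) * d) * ((α * R) ^ 2 * SL)) := by
    have hrhs : B ^ 2 / (4 * ((α * n / 2) * T)) * ((α * R) ^ 2 * SL)
        = (B ^ 2 * α * R ^ 2 * SL) / (2 * n * T) := by
      field_simp; ring
    have key2 : α * B ^ 2 * R ^ 2 * T / (2 * n * ((Z : ℝ) + 1))
        ≤ B ^ 2 / (4 * (ga * T)) * ((α * R) ^ 2 * SL) := by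
      rw [hgadef, hrhs, div_le_div_iff₀ (by positivity) (by positivity)]
      have h5 := mul_le_mul_of_nonneg_left hCS
        (show (0 : ℝ) ≤ 2 * (n : ℝ) * (α * B ^ 2 * R ^ 2) by positivity)
      linarith [h5]
    calc α * B ^ 2 * R ^ 2 * T / (2 * n * ((Z : ℝ) + 1)) * 2 ^ ((Z + 1) * d)
        ≤ (B ^ 2 / (4 * (ga * T)) * ((α * R) ^ 2 * SL)) * 2 ^ ((Z + 1) * d) :=
          mul_le_mul_of_nonneg_right key2 h2N.le
      _ = B ^ 2 / (4 * (ga * T)) * (2 ^ ((Z + 1) * d) * ((α * R) ^ 2 * SL)) := by ring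
  calc α * B ^ 2 * R ^ 2 * T / (2 * n * ((Z : ℝ) + 1)) * 2 ^ ((Z + 1) * d)
      ≤ B ^ 2 / (4 * (ga * T)) * (2 ^ ((Z + 1) * d) * ((α * R) ^ 2 * SL)) := hmain
    _ = ∑ ε : Fin (Z + 1) → Fin d → Bool,
        ((∑ i : Fin (Z + 1), ∑ t ∈ Finset.Ioc (cc (i : ℕ)) (cc ((i : ℕ) + 1)),
            B * ⟪W ε i, X t (W ε)⟫)
          + B ^ 2 * ‖sV ε‖ ^ 2 / (4 * (ga * T))) := hsum1.symm
    _ ≤ ∑ ε : Fin (Z + 1) → Fin d → Bool,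
        ((∑ i : Fin (Z + 1), ∑ t ∈ Finset.Ioc (cc (i : ℕ)) (cc ((i : ℕ) + 1)),
            (B * ⟪W ε i, X t (W ε)⟫ + ga * ‖X t (W ε)‖ ^ 2))
          - sInf ((fun x : EV d => ∑ i : Fin (Z + 1),
              ((cc ((i : ℕ) + 1) : ℝ) - (cc (i : ℕ) : ℝ)) *
                (B * ⟪W ε i, x⟫ + ga * ‖x‖ ^ 2)) '' Kset)) :=
      Finset.sum_le_sum fun ε _ => hkey ε
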